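/- arXiv:2305.01041 — 2 statements merged into one kernel-verified Lean document; each statement's English description precedes it below -/
import Mathlib

section
/- In the free symmetric monoidal category on the theory of commutative monoids (with generating morphisms a multiplication μ : 2 → 1 and unit η : 0 → 1 satisfying commutativity, unitality, and associativity), every morphism f : A → B satisfies the naturality equation (η ⊗ ... ⊗ η) ; f = η ⊗ ... ⊗ η, i.e., precomposing f with A copies of the unit yields B copies of the unit. -/
/-- `Σ`-terms over the theory `CMon` of commutative monoids on one generating object:
generated by identities, symmetries, the multiplication `μ : 2 → 1` and the unit
`η : 0 → 1` under sequential composition and tensor. -/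
inductive CMonTerm : ℕ → ℕ → Type where
  | id (n : ℕ) : CMonTerm n n
  | comp {a b c : ℕ} : CMonTerm a b → CMonTerm b c → CMonTerm a c
  | tensor {a b c d : ℕ} : CMonTerm a b → CMonTerm c d → CMonTerm (a + c) (b + d)
  | swap (m n : ℕ) : CMonTerm (m + n) (n + m)
  | mu : CMonTerm 2 1
  | eta : CMonTerm 0 1

/-- Transport a term along equalities of its boundaries. -/
def CMonTerm.castT {a a' b b' : ℕ} (ha : a = a') (hb : b = b') (x : CMonTerm a b) :
    CMonTerm a' b' := by subst ha hb; exact x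

/-- Equality of `CMon`-terms: the congruence generated by the axioms of strict
symmetric monoidal categories together with the commutative-monoid equations for
`μ` and `η`. -/
inductive CMonEq : ∀ {a b : ℕ}, CMonTerm a b → CMonTerm a b → Prop where
  | refl {a b} (x : CMonTerm a b) : CMonEq x x
  | symm {a b} {x y : CMonTerm a b} : CMonEq x y → CMonEq y x
  | trans {a b} {x y z : CMonTerm a b} : CMonEq x y → CMonEq y z → CMonEq x z
  | comp_congr {a b c} {x x' : CMonTerm a b} {y y' : CMonTerm b c} :
      CMonEq x x' → CMonEq y y' → CMonEq (x.comp y) (x'.comp y')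
  | tensor_congr {a b c d} {x x' : CMonTerm a b} {y y' : CMonTerm c d} :
      CMonEq x x' → CMonEq y y' → CMonEq (x.tensor y) (x'.tensor y')
  | id_comp {a b} (x : CMonTerm a b) : CMonEq ((CMonTerm.id a).comp x) x
  | comp_id {a b} (x : CMonTerm a b) : CMonEq (x.comp (CMonTerm.id b)) x
  | comp_assoc {a b c d} (x : CMonTerm a b) (y : CMonTerm b c) (z : CMonTerm c d) :
      CMonEq ((x.comp y).comp z) (x.comp (y.comp z))
  | interchange {a b c a' b' c'} (f : CMonTerm a b) (g : CMonTerm b c)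
      (f' : CMonTerm a' b') (g' : CMonTerm b' c') :
      CMonEq ((f.tensor f').comp (g.tensor g')) ((f.comp g).tensor (f'.comp g'))
  | tensor_id (a b : ℕ) :
      CMonEq ((CMonTerm.id a).tensor (CMonTerm.id b)) (CMonTerm.id (a + b))
  | tensor_assoc {a b c d e f} (x : CMonTerm a b) (y : CMonTerm c d) (z : CMonTerm e f) :
      CMonEq ((x.tensor y).tensor z)
        ((x.tensor (y.tensor z)).castT (Nat.add_assoc a c e).symm (Nat.add_assoc b d f).symm)
  | tensor_unit_right {a b} (x : CMonTerm a b) : CMonEq (x.tensor (CMonTerm.id 0)) x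
  | tensor_unit_left {a b} (x : CMonTerm a b) :
      CMonEq ((CMonTerm.id 0).tensor x) (x.castT (Nat.zero_add a).symm (Nat.zero_add b).symm)
  | swap_naturality {a b c d} (f : CMonTerm a b) (g : CMonTerm c d) :
      CMonEq ((f.tensor g).comp (CMonTerm.swap b d)) ((CMonTerm.swap a c).comp (g.tensor f))
  | swap_swap (m n : ℕ) :
      CMonEq ((CMonTerm.swap m n).comp (CMonTerm.swap n m)) (CMonTerm.id (m + n))
  | swap_unit (m : ℕ) :
      CMonEq (CMonTerm.swap m 0) ((CMonTerm.id m).castT rfl (Nat.zero_add m).symm)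
  | swap_hexagon (a b c : ℕ) :
      CMonEq (CMonTerm.swap (a + b) c)
        (((((CMonTerm.id a).tensor (CMonTerm.swap b c)).castT rfl
              (Nat.add_assoc a c b).symm).comp
            ((CMonTerm.swap a c).tensor (CMonTerm.id b))).castT
          (Nat.add_assoc a b c).symm (Nat.add_assoc c a b))
  | mu_comm : CMonEq ((CMonTerm.swap 1 1).comp CMonTerm.mu) CMonTerm.mu
  | mu_unit : CMonEq ((CMonTerm.eta.tensor (CMonTerm.id 1)).comp CMonTerm.mu) (CMonTerm.id 1)
  | mu_assoc : CMonEq ((CMonTerm.mu.tensor (CMonTerm.id 1)).comp CMonTerm.mu)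
      (((CMonTerm.id 1).tensor CMonTerm.mu).comp CMonTerm.mu)

/-- The `A`-fold tensor power `η ⊗ ⋯ ⊗ η : 0 → A` of the unit. -/
def etaN : (n : ℕ) → CMonTerm 0 n
  | 0 => CMonTerm.id 0
  | n + 1 => (etaN n).tensor CMonTerm.eta

/-! By induction on the term. Unit powers are additive, `η^(a + c) = η^a ⊗ η^c`, so interchange
and naturality of the symmetry carry the claim through tensors and swaps. For `μ`, write `η ⊗ η`
as `(id₀ ⊗ η) ; (η ⊗ id₁)`; the unit law `(η ⊗ id₁) ; μ = id₁` then leaves `η`. -/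

local infix:50 " ≐ " => CMonEq

namespace CMonEq

instance {a b : ℕ} : Trans (@CMonEq a b) (@CMonEq a b) (@CMonEq a b) := ⟨CMonEq.trans⟩

theorem comp_congr_left {a b c : ℕ} {x x' : CMonTerm a b} (h : x ≐ x') (y : CMonTerm b c) :
    x.comp y ≐ x'.comp y :=
  h.comp_congr (refl y)

end CMonEq

open CMonTerm

theorem etaN_one : etaN 1 ≐ eta :=
  CMonEq.tensor_unit_left eta

theorem etaN_add (a c : ℕ) : etaN (a + c) ≐ (etaN a).tensor (etaN c) := by
  induction c with
  | zero => exact (CMonEq.tensor_unit_right (etaN a)).symm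
  | succ c ih =>
    calc etaN (a + (c + 1)) ≐ ((etaN a).tensor (etaN c)).tensor eta := ih.tensor_congr (.refl eta)
      _ ≐ (etaN a).tensor ((etaN c).tensor eta) := CMonEq.tensor_assoc _ _ _

theorem etaN_comp_tensor {a b c d : ℕ} {x : CMonTerm a b} {y : CMonTerm c d}
    (hx : (etaN a).comp x ≐ etaN b) (hy : (etaN c).comp y ≐ etaN d) :
    (etaN (a + c)).comp (x.tensor y) ≐ etaN (b + d) :=
  calc (etaN (a + c)).comp (x.tensor y) ≐ ((etaN a).tensor (etaN c)).comp (x.tensor y) :=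
        (etaN_add a c).comp_congr_left _
    _ ≐ ((etaN a).comp x).tensor ((etaN c).comp y) := CMonEq.interchange _ _ _ _
    _ ≐ (etaN b).tensor (etaN d) := hx.tensor_congr hy
    _ ≐ etaN (b + d) := (etaN_add b d).symm

theorem etaN_comp_swap (m n : ℕ) : (etaN (m + n)).comp (swap m n) ≐ etaN (n + m) :=
  calc (etaN (m + n)).comp (swap m n) ≐ ((etaN m).tensor (etaN n)).comp (swap m n) :=
        (etaN_add m n).comp_congr_left _
    _ ≐ (swap 0 0).comp ((etaN n).tensor (etaN m)) := CMonEq.swap_naturality _ _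
    _ ≐ (CMonTerm.id 0).comp ((etaN n).tensor (etaN m)) := (CMonEq.swap_unit 0).comp_congr_left _
    _ ≐ (etaN n).tensor (etaN m) := CMonEq.id_comp _
    _ ≐ etaN (n + m) := (etaN_add n m).symm

theorem etaN_comp_mu : (etaN 2).comp mu ≐ etaN 1 :=
  calc (etaN 2).comp mu ≐ (eta.tensor eta).comp mu :=
        (etaN_one.tensor_congr (.refl eta)).comp_congr_left _
    _ ≐ (((CMonTerm.id 0).comp eta).tensor (eta.comp (CMonTerm.id 1))).comp mu :=
        ((CMonEq.id_comp eta).symm.tensor_congr (CMonEq.comp_id eta).symm).comp_congr_left _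
    _ ≐ (((CMonTerm.id 0).tensor eta).comp (eta.tensor (CMonTerm.id 1))).comp mu :=
        (CMonEq.interchange _ _ _ _).symm.comp_congr_left _
    _ ≐ ((CMonTerm.id 0).tensor eta).comp ((eta.tensor (CMonTerm.id 1)).comp mu) :=
        CMonEq.comp_assoc _ _ _
    _ ≐ ((CMonTerm.id 0).tensor eta).comp (CMonTerm.id 1) :=
        (CMonEq.refl _).comp_congr CMonEq.mu_unit
    _ ≐ etaN 1 := CMonEq.comp_id _

/-- Naturality of the unit in the free symmetric monoidal category on `CMon`:
for every morphism `f : A → B`, precomposing `f` with `A` copies of `η` is equal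
(modulo the SMC and `CMon` equations) to `B` copies of `η`. -/
theorem eta_naturality (A B : ℕ) (f : CMonTerm A B) :
    CMonEq ((etaN A).comp f) (etaN B) := by
  induction f with
  | id n => exact CMonEq.comp_id _
  | comp x y hx hy =>
    exact (CMonEq.comp_assoc _ x y).symm.trans ((hx.comp_congr_left y).trans hy)
  | tensor x y hx hy => exact etaN_comp_tensor hx hy
  | swap m n => exact etaN_comp_swap m n
  | mu => exact etaN_comp_mu
  | eta => exact (CMonEq.id_comp eta).trans etaN_one.symm
end

section
/- Let C be a hypergraph category and let f : A → B be any morphism built by tensor and composition from id, the symmetry σ, the comultiplication δ, and the multiplication μ of the Frobenius structures. Then δ is 'natural' with respect to f: f ; δ_B = δ_A ; (f ⊗ f), and μ is 'natural' with respect to f: (f ⊗ f) ; μ_B = μ_A ; f. -/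
open CategoryTheory MonoidalCategory

/-- A hypergraph category structure: a chosen special Frobenius monoid
`(μ X, η X, δ X, ε X)` on every object of a symmetric monoidal category, compatible
with the tensor product and the unit. -/
class HypergraphStructure (C : Type*) [Category C] [MonoidalCategory C]
    [SymmetricCategory C] where
  mu : ∀ X : C, X ⊗ X ⟶ X
  eta : ∀ X : C, 𝟙_ C ⟶ X
  delta : ∀ X : C, X ⟶ X ⊗ X
  eps : ∀ X : C, X ⟶ 𝟙_ C
  mu_assoc : ∀ X : C, (α_ X X X).hom ≫ (X ◁ mu X) ≫ mu X = (mu X ▷ X) ≫ mu X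
  mu_comm : ∀ X : C, (β_ X X).hom ≫ mu X = mu X
  mu_unit : ∀ X : C, (λ_ X).inv ≫ (eta X ▷ X) ≫ mu X = 𝟙 X
  delta_coassoc : ∀ X : C,
    delta X ≫ (X ◁ delta X) = delta X ≫ (delta X ▷ X) ≫ (α_ X X X).hom
  delta_cocomm : ∀ X : C, delta X ≫ (β_ X X).hom = delta X
  delta_counit : ∀ X : C, delta X ≫ (eps X ▷ X) ≫ (λ_ X).hom = 𝟙 X
  frobenius : ∀ X : C, (delta X ▷ X) ≫ (α_ X X X).hom ≫ (X ◁ mu X) = mu X ≫ delta X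
  frobenius' : ∀ X : C, (X ◁ delta X) ≫ (α_ X X X).inv ≫ (mu X ▷ X) = mu X ≫ delta X
  special : ∀ X : C, delta X ≫ mu X = 𝟙 X
  mu_tensor : ∀ X Y : C, mu (X ⊗ Y) = tensorμ X Y X Y ≫ (mu X ⊗ₘ mu Y)
  eta_tensor : ∀ X Y : C, eta (X ⊗ Y) = (λ_ (𝟙_ C)).inv ≫ (eta X ⊗ₘ eta Y)
  delta_tensor : ∀ X Y : C, delta (X ⊗ Y) = (delta X ⊗ₘ delta Y) ≫ tensorμ X X Y Y
  eps_tensor : ∀ X Y : C, eps (X ⊗ Y) = (eps X ⊗ₘ eps Y) ≫ (λ_ (𝟙_ C)).hom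
  mu_unit_obj : mu (𝟙_ C) = (λ_ (𝟙_ C)).hom
  eta_unit_obj : eta (𝟙_ C) = 𝟙 (𝟙_ C)
  delta_unit_obj : delta (𝟙_ C) = (λ_ (𝟙_ C)).inv
  eps_unit_obj : eps (𝟙_ C) = 𝟙 (𝟙_ C)

namespace HypergraphStructure

variable {C : Type*} [Category C] [MonoidalCategory C] [SymmetricCategory C]
  [HypergraphStructure C]

/-- `cup X = η ; δ : I ⟶ X ⊗ X`. -/
def cup (X : C) : 𝟙_ C ⟶ X ⊗ X := eta X ≫ delta X

/-- `cap X = μ ; ε : X ⊗ X ⟶ I`. -/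
def cap (X : C) : X ⊗ X ⟶ 𝟙_ C := mu X ≫ eps X

/-- The dagger induced by the Frobenius structure: bend the input and output wires of
`f` using a cup on the source and a cap on the target. -/
def dagger {A B : C} (f : A ⟶ B) : B ⟶ A :=
  (λ_ B).inv ≫ (cup A ▷ B) ≫ (α_ A A B).hom ≫ (A ◁ (f ▷ B)) ≫ (A ◁ cap B) ≫ (ρ_ A).hom

end HypergraphStructure

open HypergraphStructure

/-- Morphisms of a hypergraph category built by tensor and composition from identities,
symmetries, the comultiplications `δ` and the multiplications `μ` (together with the
structural isomorphisms, which are identities in the strict setting). -/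
inductive SpiderGen {C : Type*} [Category C] [MonoidalCategory C] [SymmetricCategory C]
    [HypergraphStructure C] : ∀ {X Y : C}, (X ⟶ Y) → Prop where
  | id (X : C) : SpiderGen (𝟙 X)
  | braiding (X Y : C) : SpiderGen (β_ X Y).hom
  | delta (X : C) : SpiderGen (delta X)
  | mu (X : C) : SpiderGen (mu X)
  | assoc (X Y Z : C) : SpiderGen (α_ X Y Z).hom
  | assoc_inv (X Y Z : C) : SpiderGen (α_ X Y Z).inv
  | leftUnitor (X : C) : SpiderGen (λ_ X).hom
  | leftUnitor_inv (X : C) : SpiderGen (λ_ X).inv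
  | rightUnitor (X : C) : SpiderGen (ρ_ X).hom
  | rightUnitor_inv (X : C) : SpiderGen (ρ_ X).inv
  | comp {X Y Z : C} {f : X ⟶ Y} {g : Y ⟶ Z} :
      SpiderGen f → SpiderGen g → SpiderGen (f ≫ g)
  | tensor {X Y Z W : C} {f : X ⟶ Y} {g : Z ⟶ W} :
      SpiderGen f → SpiderGen g → SpiderGen (f ⊗ₘ g)

/-!
`μ`-naturality of `f` says that `f` is multiplicative for the commutative monoids
`(X, μ X, η X)`. Since `μ (X ⊗ Y)` is the tensor product of monoid structures, associators,
unitors and the symmetry are multiplicative by the general theory of monoid objects, `μ` is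
multiplicative by commutativity, and `δ` by the bialgebra law `μ ≫ δ = (δ ⊗ δ) ≫ tensorμ ≫ (μ ⊗ μ)`,
which follows from the Frobenius and special laws. The hypergraph axioms are self-dual, so `Cᵒᵖ`
with `μ` and `δ` exchanged is again a hypergraph category, and `δ`-naturality of `f` is
`μ`-naturality of `f.op` there.
-/

section Opposite

open Opposite

variable {C : Type*} [Category C] [MonoidalCategory C] [SymmetricCategory C]

instance : SymmetricCategory Cᵒᵖ where
  symmetry X Y := Quiver.Hom.unop_inj (SymmetricCategory.symmetry (unop X) (unop Y))

instance [HypergraphStructure C] : HypergraphStructure Cᵒᵖ where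
  mu X := (delta (unop X)).op
  eta X := (eps (unop X)).op
  delta X := (mu (unop X)).op
  eps X := (eta (unop X)).op
  mu_assoc X := Quiver.Hom.unop_inj (by simp [reassoc_of% delta_coassoc (unop X)])
  mu_comm X := Quiver.Hom.unop_inj (by simpa using delta_cocomm (unop X))
  mu_unit X := Quiver.Hom.unop_inj (by simpa using delta_counit (unop X))
  delta_coassoc X := Quiver.Hom.unop_inj (by simp [← mu_assoc (unop X)])
  delta_cocomm X := Quiver.Hom.unop_inj (by simpa using mu_comm (unop X))
  delta_counit X := Quiver.Hom.unop_inj (by simpa using mu_unit (unop X))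
  frobenius X := Quiver.Hom.unop_inj (by simpa using frobenius' (unop X))
  frobenius' X := Quiver.Hom.unop_inj (by simpa using frobenius (unop X))
  special X := Quiver.Hom.unop_inj (by simpa using special (unop X))
  mu_tensor X Y := Quiver.Hom.unop_inj (by simpa using delta_tensor (unop X) (unop Y))
  eta_tensor X Y := Quiver.Hom.unop_inj (by simpa using eps_tensor (unop X) (unop Y))
  delta_tensor X Y := Quiver.Hom.unop_inj (by simpa using mu_tensor (unop X) (unop Y))
  eps_tensor X Y := Quiver.Hom.unop_inj (by simpa using eta_tensor (unop X) (unop Y))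
  mu_unit_obj := Quiver.Hom.unop_inj (by simpa using delta_unit_obj (C := C))
  eta_unit_obj := Quiver.Hom.unop_inj (by simpa using eps_unit_obj (C := C))
  delta_unit_obj := Quiver.Hom.unop_inj (by simpa using mu_unit_obj (C := C))
  eps_unit_obj := Quiver.Hom.unop_inj (by simpa using eta_unit_obj (C := C))

end Opposite

namespace HypergraphStructure

variable {C : Type*} [Category C] [MonoidalCategory C] [SymmetricCategory C]
  [HypergraphStructure C] {A B D E : C}

lemma eta_whiskerRight_mu (X : C) : eta X ▷ X ≫ mu X = (λ_ X).hom := by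
  simpa using (Iso.inv_comp_eq _).mp (mu_unit X)

instance (X : C) : MonObj X where
  one := eta X
  mul := mu X
  one_mul := eta_whiskerRight_mu X
  mul_one := by
    rw [← mu_comm, BraidedCategory.braiding_naturality_right_assoc, eta_whiskerRight_mu,
      braiding_leftUnitor]
  mul_assoc := (mu_assoc X).symm

instance (X : C) : IsCommMonObj X where
  mul_comm := mu_comm X

lemma frobenius_braiding (X : C) :
    X ◁ delta X ≫ (α_ X X X).inv ≫ (β_ X X).hom ▷ X ≫ (α_ X X X).hom ≫ X ◁ mu X =
      mu X ≫ delta X :=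
  calc _ = (β_ X X).hom ≫ delta X ▷ X ≫ (α_ X X X).hom ≫ X ◁ mu X := by
        rw [← BraidedCategory.braiding_naturality_right_assoc,
          BraidedCategory.braiding_tensor_right_hom]
        simp only [Category.assoc, Iso.inv_hom_id_assoc, ← MonoidalCategory.whiskerLeft_comp,
          mu_comm]
    _ = mu X ≫ delta X := by rw [frobenius, ← Category.assoc, mu_comm]

def MuNatural (f : A ⟶ B) : Prop := (f ⊗ₘ f) ≫ mu B = mu A ≫ f

lemma muNatural_id (X : C) : MuNatural (𝟙 X) := by
  simp [MuNatural]

lemma MuNatural.comp {f : A ⟶ B} {g : B ⟶ D} (hf : MuNatural f) (hg : MuNatural g) :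
    MuNatural (f ≫ g) := by
  rw [MuNatural, ← tensorHom_comp_tensorHom, Category.assoc, hg, reassoc_of% hf]

lemma MuNatural.tensor {f : A ⟶ B} {g : D ⟶ E} (hf : MuNatural f) (hg : MuNatural g) :
    MuNatural (f ⊗ₘ g) := by
  rw [MuNatural, mu_tensor, mu_tensor, tensorμ_natural_assoc, tensorHom_comp_tensorHom, hf, hg,
    ← tensorHom_comp_tensorHom, Category.assoc]

lemma MuNatural.inv (e : A ≅ B) (he : MuNatural e.hom) : MuNatural e.inv := by
  rw [MuNatural, ← cancel_mono e.hom, Category.assoc, ← he, ← Category.assoc,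
    tensorHom_comp_tensorHom]
  simp

lemma muNatural_braiding (X Y : C) : MuNatural (β_ X Y).hom := by
  rw [MuNatural, mu_tensor, mu_tensor]
  exact (MonObj.mul_braiding X Y).symm

lemma muNatural_associator (X Y Z : C) : MuNatural (α_ X Y Z).hom := by
  rw [MuNatural, mu_tensor, mu_tensor, mu_tensor, mu_tensor]
  exact MonObj.mul_associator.symm

lemma muNatural_leftUnitor (X : C) : MuNatural (λ_ X).hom := by
  rw [MuNatural, mu_tensor, mu_unit_obj]
  exact MonObj.mul_leftUnitor.symm

lemma muNatural_rightUnitor (X : C) : MuNatural (ρ_ X).hom := by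
  rw [MuNatural, mu_tensor, mu_unit_obj]
  exact MonObj.mul_rightUnitor.symm

lemma muNatural_mu (X : C) : MuNatural (mu X) := by
  rw [MuNatural, mu_tensor, Category.assoc]
  exact (MonObj.mul_mul_mul_comm X).symm

lemma muNatural_delta (X : C) : MuNatural (delta X) := by
  rw [MuNatural, mu_tensor]
  calc (delta X ⊗ₘ delta X) ≫ tensorμ X X X X ≫ (mu X ⊗ₘ mu X)
      = delta X ▷ X ≫ (α_ X X X).hom ≫
          X ◁ (X ◁ delta X ≫ (α_ X X X).inv ≫ (β_ X X).hom ▷ X ≫ (α_ X X X).hom ≫ X ◁ mu X) ≫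
          (α_ X X X).inv ≫ mu X ▷ X := by
        rw [MonoidalCategory.tensorHom_def, tensorHom_def', tensorμ]
        monoidal
    _ = (delta X ▷ X ≫ (α_ X X X).hom ≫ X ◁ mu X) ≫
          (X ◁ delta X ≫ (α_ X X X).inv ≫ mu X ▷ X) := by
        simp only [frobenius_braiding, MonoidalCategory.whiskerLeft_comp, Category.assoc]
    _ = mu X ≫ delta X := by
        rw [frobenius, frobenius', Category.assoc, ← Category.assoc (delta X), special,
          Category.id_comp]

lemma muNatural_of_spiderGen {f : A ⟶ B} (hf : SpiderGen f) : MuNatural f := by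
  induction hf with
  | id X => exact muNatural_id X
  | braiding X Y => exact muNatural_braiding X Y
  | delta X => exact muNatural_delta X
  | mu X => exact muNatural_mu X
  | assoc X Y Z => exact muNatural_associator X Y Z
  | assoc_inv X Y Z => exact (muNatural_associator X Y Z).inv
  | leftUnitor X => exact muNatural_leftUnitor X
  | leftUnitor_inv X => exact (muNatural_leftUnitor X).inv
  | rightUnitor X => exact muNatural_rightUnitor X
  | rightUnitor_inv X => exact (muNatural_rightUnitor X).inv
  | comp _ _ hf hg => exact hf.comp hg
  | tensor _ _ hf hg => exact hf.tensor hg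

lemma comp_delta_of_muNatural_op {f : A ⟶ B} (h : MuNatural f.op) :
    f ≫ delta B = delta A ≫ (f ⊗ₘ f) :=
  Quiver.Hom.op_inj h.symm

end HypergraphStructure

lemma SpiderGen.op {C : Type*} [Category C] [MonoidalCategory C] [SymmetricCategory C]
    [HypergraphStructure C] {X Y : C} {f : X ⟶ Y} (hf : SpiderGen f) : SpiderGen f.op := by
  induction hf with
  | id X => exact .id _
  | braiding X Y => exact .braiding _ _
  | delta X => exact .mu _
  | mu X => exact .delta _
  | assoc X Y Z => exact .assoc_inv _ _ _
  | assoc_inv X Y Z => exact .assoc _ _ _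
  | leftUnitor X => exact .leftUnitor_inv _
  | leftUnitor_inv X => exact .leftUnitor _
  | rightUnitor X => exact .rightUnitor_inv _
  | rightUnitor_inv X => exact .rightUnitor _
  | comp _ _ hf hg => exact hg.comp hf
  | tensor _ _ hf hg => exact hf.tensor hg

/-- `δ` and `μ` are natural with respect to every morphism `f` built from
`id`, `σ`, `δ` and `μ`:  `f ; δ = δ ; (f ⊗ f)` and `(f ⊗ f) ; μ = μ ; f`. -/
theorem spider_partial_naturality {C : Type*} [Category C] [MonoidalCategory C]
    [SymmetricCategory C] [HypergraphStructure C] {A B : C} (f : A ⟶ B)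
    (hf : SpiderGen f) :
    f ≫ delta B = delta A ≫ (f ⊗ₘ f) ∧ (f ⊗ₘ f) ≫ mu B = mu A ≫ f :=
  ⟨comp_delta_of_muNatural_op (muNatural_of_spiderGen hf.op), muNatural_of_spiderGen hf⟩
end
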